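/- Let n ≥ 2 and let f : Γ₊ → ℝ be smooth, symmetric, strictly monotone, positively homogeneous of degree one, and convex. Then for every λ ∈ Γ₊ one has n·∑_{i=1}^n ∂f/∂λᵢ(λ)·λᵢ² ≥ H(λ)·f(λ) (i.e. n·tr_{Ḟ}(A𝒲) − H·F ≥ 0), with equality if and only if λ₁ = λ₂ = ⋯ = λₙ. -/

import Mathlib

/-- The open positive cone Γ₊ = {λ ∈ ℝⁿ : λᵢ > 0 for all i}. -/
def posCone (n : ℕ) : Set (Fin n → ℝ) := {x | ∀ i, 0 < x i}

lemma isOpen_posCone (n : ℕ) : IsOpen (posCone n) := by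
  have : posCone n = Set.univ.pi (fun _ : Fin n => Set.Ioi (0:ℝ)) := by
    ext x; simp [posCone]
  rw [this]
  exact isOpen_set_pi Set.finite_univ (fun i _ => isOpen_Ioi)

lemma grad_ineq {n : ℕ} {f : (Fin n → ℝ) → ℝ} (hconv : ConvexOn ℝ (posCone n) f)
    {x y : Fin n → ℝ} (hx : x ∈ posCone n) (hy : y ∈ posCone n)
    {L : (Fin n → ℝ) →L[ℝ] ℝ} (hL : HasFDerivAt f L x) : L (y - x) ≤ f y - f x := by
  have hgc : ConvexOn ℝ ((AffineMap.lineMap x y : ℝ →ᵃ[ℝ] (Fin n → ℝ)) ⁻¹' posCone n)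
      (f ∘ (AffineMap.lineMap x y : ℝ →ᵃ[ℝ] (Fin n → ℝ))) :=
    hconv.comp_affineMap _
  have h0 : (0:ℝ) ∈ (AffineMap.lineMap x y : ℝ →ᵃ[ℝ] (Fin n → ℝ)) ⁻¹' posCone n := by
    simp [Set.mem_preimage, AffineMap.lineMap_apply_zero, hx]
  have h1 : (1:ℝ) ∈ (AffineMap.lineMap x y : ℝ →ᵃ[ℝ] (Fin n → ℝ)) ⁻¹' posCone n := by
    simp [Set.mem_preimage, AffineMap.lineMap_apply_one, hy]
  have hderiv : HasDerivAt (f ∘ (AffineMap.lineMap x y : ℝ →ᵃ[ℝ] (Fin n → ℝ))) (L (y - x)) 0 := by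
    have hl : HasDerivAt (fun t : ℝ => (AffineMap.lineMap x y : ℝ →ᵃ[ℝ] (Fin n → ℝ)) t)
        (y - x) 0 := by
      have : HasDerivAt (fun t : ℝ => t • (y - x) + x) ((1:ℝ) • (y - x)) 0 :=
        ((hasDerivAt_id 0).smul_const (y - x)).add_const x
      simpa [AffineMap.lineMap_apply_module'] using this
    have hL' : HasFDerivAt f L ((AffineMap.lineMap x y : ℝ →ᵃ[ℝ] (Fin n → ℝ)) 0) := by
      simpa [AffineMap.lineMap_apply_zero] using hL
    exact hL'.comp_hasDerivAt 0 hl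
  have := hgc.le_slope_of_hasDerivAt h0 h1 one_pos hderiv
  simpa [slope_def_field, AffineMap.lineMap_apply_zero, AffineMap.lineMap_apply_one] using this

lemma euler_aux {n : ℕ} {f : (Fin n → ℝ) → ℝ}
    (hhom : ∀ k : ℝ, 0 < k → ∀ x ∈ posCone n, f (k • x) = k * f x)
    {lam : Fin n → ℝ} (hlam : lam ∈ posCone n)
    {L : (Fin n → ℝ) →L[ℝ] ℝ} (hL : HasFDerivAt f L lam) : L lam = f lam := by
  have hs : HasDerivAt (fun k : ℝ => k • lam) lam 1 := by
    simpa using (hasDerivAt_id (1:ℝ)).smul_const lam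
  have hL' : HasFDerivAt f L ((1:ℝ) • lam) := by simpa using hL
  have h1 : HasDerivAt (fun k : ℝ => f (k • lam)) (L lam) 1 := hL'.comp_hasDerivAt 1 hs
  have hev : (fun k : ℝ => k * f lam) =ᶠ[nhds (1:ℝ)] (fun k : ℝ => f (k • lam)) := by
    filter_upwards [Ioi_mem_nhds one_pos] with k hk
    exact (hhom k hk lam hlam).symm
  have h1' : HasDerivAt (fun k : ℝ => k * f lam) (L lam) 1 := h1.congr_of_eventuallyEq hev
  have h2 : HasDerivAt (fun k : ℝ => k * f lam) (f lam) 1 := by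
    simpa using (hasDerivAt_id (1:ℝ)).mul_const (f lam)
  exact h1'.unique h2

lemma single_decomp {n : ℕ} (lam : Fin n → ℝ) (L : (Fin n → ℝ) →L[ℝ] ℝ) :
    L lam = ∑ i, lam i * L (Pi.single i 1) := by
  have hrep : lam = ∑ i, lam i • (Pi.single i (1:ℝ) : Fin n → ℝ) := by
    have h : ∀ i : Fin n, lam i • (Pi.single i (1:ℝ) : Fin n → ℝ) = Pi.single i (lam i) := by
      intro i; funext j; by_cases hj : j = i <;> simp [Pi.single_apply, hj]
    simp_rw [h]
    exact (Finset.univ_sum_single lam).symm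
  conv_lhs => rw [hrep]
  rw [map_sum]
  simp [smul_eq_mul]

lemma swap_decomp {n : ℕ} (lam : Fin n → ℝ) {i j : Fin n} (hij : i ≠ j) :
    lam ∘ (Equiv.swap i j) - lam
      = (lam j - lam i) • (Pi.single i (1:ℝ) - Pi.single j 1) := by
  funext k
  simp only [Pi.sub_apply, Function.comp_apply, Pi.smul_apply, smul_eq_mul]
  by_cases hk : k = i
  · subst hk; simp [Equiv.swap_apply_left, Pi.single_apply, hij]
  · by_cases hk' : k = j
    · subst hk'; simp [Equiv.swap_apply_right, Pi.single_apply, hij.symm]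
    · simp [Equiv.swap_apply_of_ne_of_ne hk hk', Pi.single_apply, hk, hk']

lemma sum_pair_identity (n : ℕ) (x a : Fin n → ℝ) :
    ∑ i, ∑ j, (x i - x j) * (a i - a j)
      = 2 * ((n:ℝ) * ∑ i, x i * a i) - 2 * ((∑ i, x i) * (∑ i, a i)) := by
  have h : ∀ i j : Fin n, (x i - x j) * (a i - a j)
      = x i * a i + x j * a j - x i * a j - x j * a i := fun i j => by ring
  have h1 : ∑ _i : Fin n, ∑ _j : Fin n, x _i * a _i = (n:ℝ) * ∑ i, x i * a i := by
    simp [Finset.sum_const, Finset.mul_sum]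
  have h2 : ∑ _i : Fin n, ∑ j : Fin n, x j * a j = (n:ℝ) * ∑ i, x i * a i := by
    simp [Finset.sum_const, Finset.mul_sum, mul_comm]
  have h3 : ∑ i : Fin n, ∑ j : Fin n, x i * a j = (∑ i, x i) * (∑ i, a i) :=
    (Finset.sum_mul_sum _ _ _ _).symm
  have h4 : ∑ i : Fin n, ∑ j : Fin n, x j * a i = (∑ i, x i) * (∑ i, a i) := by
    rw [Finset.sum_comm]; exact (Finset.sum_mul_sum _ _ _ _).symm
  calc ∑ i, ∑ j, (x i - x j) * (a i - a j)
      = (∑ i : Fin n, ∑ _j : Fin n, x i * a i) + (∑ _i : Fin n, ∑ j : Fin n, x j * a j)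
        - (∑ i : Fin n, ∑ j : Fin n, x i * a j) - (∑ i : Fin n, ∑ j : Fin n, x j * a i) := by
        simp [h, Finset.sum_add_distrib, Finset.sum_sub_distrib]
    _ = _ := by rw [h1, h2, h3, h4]; ring

/-- Rigidity statement from the proof of Proposition 7.4: for f smooth, symmetric,
strictly monotone, 1-homogeneous and convex on Γ₊, one has
n·∑ᵢ (∂f/∂λᵢ)λᵢ² ≥ H(λ)·f(λ), with equality iff λ₁ = ⋯ = λₙ. -/
theorem stmt_6 (n : ℕ) (hn : 2 ≤ n) (f : (Fin n → ℝ) → ℝ)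
    (hsmooth : ContDiffOn ℝ (⊤ : ℕ∞) f (posCone n))
    (hsym : ∀ (σ : Equiv.Perm (Fin n)), ∀ x ∈ posCone n, f (x ∘ σ) = f x)
    (hmono : ∀ x ∈ posCone n, ∀ i, 0 < fderivWithin ℝ f (posCone n) x (Pi.single i 1))
    (hhom : ∀ k : ℝ, 0 < k → ∀ x ∈ posCone n, f (k • x) = k * f x)
    (hconv : ConvexOn ℝ (posCone n) f) :
    ∀ lam ∈ posCone n,
      (∑ i, lam i) * f lam
          ≤ (n : ℝ) * ∑ i, fderivWithin ℝ f (posCone n) lam (Pi.single i 1) * (lam i) ^ 2 ∧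
      ((n : ℝ) * (∑ i, fderivWithin ℝ f (posCone n) lam (Pi.single i 1) * (lam i) ^ 2)
          = (∑ i, lam i) * f lam ↔ ∀ i j, lam i = lam j) := by
  intro lam hlam
  have hnh : posCone n ∈ nhds lam := (isOpen_posCone n).mem_nhds hlam
  have hdiff : DifferentiableAt ℝ f lam :=
    (hsmooth.differentiableOn (by simp)).differentiableAt hnh
  set L : (Fin n → ℝ) →L[ℝ] ℝ := fderiv ℝ f lam with hLdef
  have hfw : fderivWithin ℝ f (posCone n) lam = L := fderivWithin_of_mem_nhds hnh
  have hL : HasFDerivAt f L lam := hdiff.hasFDerivAt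
  obtain ⟨D, hD⟩ : ∃ D : Fin n → ℝ, ∀ i, D i = L (Pi.single i 1) := ⟨_, fun _ => rfl⟩
  obtain ⟨a, ha⟩ : ∃ a : Fin n → ℝ, ∀ i, a i = lam i * D i := ⟨_, fun _ => rfl⟩
  have euler : f lam = ∑ i, a i := by
    rw [← euler_aux hhom hlam hL, single_decomp]
    exact Finset.sum_congr rfl fun i _ => by rw [ha, hD]
  have Dpos : ∀ i, 0 < D i := fun i => by
    have := hmono lam hlam i; rw [hfw] at this; rwa [hD]
  have hij : ∀ i j : Fin n, i ≠ j → (lam j - lam i) * (D i - D j) ≤ 0 := by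
    intro i j hne
    have hy : (lam ∘ Equiv.swap i j) ∈ posCone n := fun k => hlam _
    have hgrad := grad_ineq hconv hlam hy hL
    have hfy : f (lam ∘ Equiv.swap i j) = f lam := hsym _ lam hlam
    have hcalc : L (lam ∘ Equiv.swap i j - lam) = (lam j - lam i) * (D i - D j) := by
      rw [swap_decomp lam hne, map_smul, map_sub, hD, hD]
      simp [smul_eq_mul]
    rw [hcalc, hfy, sub_self] at hgrad
    exact hgrad
  have pairpos : ∀ i j : Fin n, lam j < lam i → 0 < (lam i - lam j) * (a i - a j) := by
    intro i j hlt
    have hne : i ≠ j := by rintro rfl; exact lt_irrefl _ hlt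
    have h1 := hij i j hne
    have hDij : 0 ≤ D i - D j := by nlinarith [sub_pos.2 hlt]
    have hDj := Dpos j
    have hli := hlam i
    rw [ha, ha]
    nlinarith [mul_pos (mul_pos (sub_pos.2 hlt) (sub_pos.2 hlt)) hDj,
      mul_nonneg (mul_nonneg (sub_pos.2 hlt).le hli.le) hDij]
  have pairnonneg : ∀ i j : Fin n, 0 ≤ (lam i - lam j) * (a i - a j) := by
    intro i j
    rcases lt_trichotomy (lam i) (lam j) with h | h | h
    · have h2 : (lam i - lam j) * (a i - a j) = (lam j - lam i) * (a j - a i) := by ring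
      rw [h2]; exact (pairpos j i h).le
    · rw [h]; simp
    · exact (pairpos i j h).le
  have key := sum_pair_identity n lam a
  have hgoal_rw : (∑ i, fderivWithin ℝ f (posCone n) lam (Pi.single i 1) * (lam i) ^ 2)
      = ∑ i, lam i * a i := by
    refine Finset.sum_congr rfl fun i _ => ?_
    rw [hfw, ha, ← hD]; ring
  have hsum_nonneg : 0 ≤ ∑ i, ∑ j, (lam i - lam j) * (a i - a j) :=
    Finset.sum_nonneg fun i _ => Finset.sum_nonneg fun j _ => pairnonneg i j
  constructor
  · rw [hgoal_rw, euler]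
    linarith
  · rw [hgoal_rw, euler]
    constructor
    · intro hE
      have hzero : ∑ i, ∑ j, (lam i - lam j) * (a i - a j) = 0 := by linarith
      intro i j
      by_contra hne
      have hterm : (lam i - lam j) * (a i - a j) = 0 := by
        have hrow := (Finset.sum_eq_zero_iff_of_nonneg
          (fun i _ => Finset.sum_nonneg fun j _ => pairnonneg i j)).mp hzero i (Finset.mem_univ i)
        exact (Finset.sum_eq_zero_iff_of_nonneg
          (fun j _ => pairnonneg i j)).mp hrow j (Finset.mem_univ j)
      have hpos : 0 < (lam i - lam j) * (a i - a j) := by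
        rcases lt_trichotomy (lam i) (lam j) with h | h | h
        · have h2 : (lam i - lam j) * (a i - a j) = (lam j - lam i) * (a j - a i) := by ring
          rw [h2]; exact pairpos j i h
        · exact absurd h hne
        · exact pairpos i j h
      linarith
    · intro hEq
      have hzero : ∑ i, ∑ j, (lam i - lam j) * (a i - a j) = 0 :=
        Finset.sum_eq_zero fun i _ => Finset.sum_eq_zero fun j _ => by rw [hEq i j]; ring
      linarith
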